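/- Let x_1, x_2, x_3, x_4 be complex roots of unity with x_1 + x_2 + x_3 + x_4 = 0. Then there exist indices i ≠ j with x_i + x_j = 0. -/

import Mathlib

theorem stmt8 (x : Fin 4 → ℂ)
    (hroot : ∀ i, ∃ m : ℕ, 1 ≤ m ∧ x i ^ m = 1)
    (hsum : ∑ i, x i = 0) :
    ∃ i j, i ≠ j ∧ x i + x j = 0 := by
  have hne : ∀ i, x i ≠ 0 := by
    intro i h
    obtain ⟨m, hm, hx⟩ := hroot i
    rw [h, zero_pow (by omega)] at hx
    exact one_ne_zero hx.symm
  have hconj : ∀ i, (starRingEnd ℂ) (x i) = (x i)⁻¹ := by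
    intro i
    obtain ⟨m, hm, hx⟩ := hroot i
    have h1 : ‖x i‖ ^ m = 1 := by rw [← norm_pow, hx, norm_one]
    have h2 : ‖x i‖ = 1 := by
      rcases lt_trichotomy (‖x i‖) 1 with h | h | h
      · have := pow_lt_one₀ (norm_nonneg _) h (show m ≠ 0 by omega)
        linarith
      · exact h
      · have := one_lt_pow₀ h (show m ≠ 0 by omega)
        linarith
    have h3 : x i * (starRingEnd ℂ) (x i) = 1 := by
      rw [Complex.mul_conj, Complex.normSq_eq_norm_sq, h2]
      norm_num
    exact eq_inv_of_mul_eq_one_right (by linear_combination h3)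
  have hcsum : ∑ i, (x i)⁻¹ = 0 := by
    have := congrArg (starRingEnd ℂ) hsum
    rw [map_sum, map_zero] at this
    rw [← this]
    exact Finset.sum_congr rfl fun i _ => (hconj i).symm
  rw [Fin.sum_univ_four] at hsum hcsum
  have h0 := hne 0; have h1 := hne 1; have h2 := hne 2; have h3 := hne 3
  have hT : x 1 * (x 2) * (x 3) + x 0 * (x 2) * (x 3) + x 0 * (x 1) * (x 3)
      + x 0 * (x 1) * (x 2) = 0 := by
    field_simp at hcsum
    linear_combination hcsum
  have key : (x 0 + x 1) * ((x 0 + x 2) * (x 1 + x 2)) = 0 := by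
    have hd : x 3 = -(x 0 + x 1 + x 2) := by linear_combination hsum
    linear_combination -hT + (x 1 * x 2 + x 0 * x 2 + x 0 * x 1) * hd
  rcases mul_eq_zero.mp key with h | h
  · exact ⟨0, 1, by decide, h⟩
  · rcases mul_eq_zero.mp h with h | h
    · exact ⟨0, 2, by decide, h⟩
    · exact ⟨1, 2, by decide, h⟩
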